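/- The Fischer–Ladner closure of a finite set of PDL formulas is finite. -/

import Mathlib

/-! The closure of `Γ` is the set of formulas reachable from `Γ` by single closure-rule steps, so
it suffices that each formula reaches only finitely many. Those are collected in a finite set by
recursion on formulas and programs, where the diamonds `⟨π⟩A` are unfolded by recursion on `π`
alone: the only rule that enlarges a formula, `⟨π*⟩A ↦ ⟨π⟩⟨π*⟩A`, still shrinks the program
being unfolded. -/

namespace PEDAL

mutual
inductive Form : Type where
  | atom : ℕ → Form
  | bot  : Form
  | neg  : Form → Form
  | or   : Form → Form → Form
  | dia  : Prog → Form → Form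
  | nec  : Form → Form
deriving DecidableEq
inductive Prog : Type where
  | atom : ℕ → Prog
  | seq  : Prog → Prog → Prog
  | choice : Prog → Prog → Prog
  | star : Prog → Prog
  | test : Form → Prog
deriving DecidableEq
end

def Form.impl (A B : Form) : Form := Form.or (Form.neg A) B
def Form.and (A B : Form) : Form := Form.neg (Form.or (Form.neg A) (Form.neg B))
def Form.iff (A B : Form) : Form := (A.impl B).and (B.impl A)
def Form.box (π : Prog) (A : Form) : Form := Form.neg (Form.dia π (Form.neg A))
def Form.diam (A : Form) : Form := Form.neg (Form.nec (Form.neg A))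
def Form.top : Form := Form.neg Form.bot

/-- Boolean evaluation treating atoms, diamond- and box-formulas as atoms. -/
def beval (v : Form → Bool) : Form → Bool
  | Form.bot => false
  | Form.neg A => ! beval v A
  | Form.or A B => beval v A || beval v B
  | A => v A

def Taut (A : Form) : Prop := ∀ v, beval v A = true


structure ModelData (S : Type) where
  vf : ℕ → Set S
  vp : ℕ → S → S → Prop
  Rbox : S → S → Prop

mutual
def Sat {S : Type} (M : ModelData S) (s : S) : Form → Prop
  | Form.atom a => s ∈ M.vf a
  | Form.bot => False
  | Form.neg A => ¬ Sat M s A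
  | Form.or A B => Sat M s A ∨ Sat M s B
  | Form.dia π A => ∃ t, Rel M π s t ∧ Sat M t A
  | Form.nec A => ∀ t, M.Rbox s t → Sat M t A
def Rel {S : Type} (M : ModelData S) : Prog → S → S → Prop
  | Prog.atom p => M.vp p
  | Prog.seq π₁ π₂ => fun s u => ∃ t, Rel M π₁ s t ∧ Rel M π₂ t u
  | Prog.choice π₁ π₂ => fun s t => Rel M π₁ s t ∨ Rel M π₂ s t
  | Prog.star π => Relation.ReflTransGen (Rel M π)
  | Prog.test A => fun s t => s = t ∧ Sat M s A
end
/-- The Hilbert system for PDL. -/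
inductive PDLProv : Form → Prop where
  | taut {A : Form} : Taut A → PDLProv A
  | k {π : Prog} {A B : Form} : PDLProv ((Form.box π (A.impl B)).impl ((Form.box π A).impl (Form.box π B)))
  | boxAnd {π : Prog} {A B : Form} : PDLProv ((Form.box π (A.and B)).iff ((Form.box π A).and (Form.box π B)))
  | choice {π₁ π₂ : Prog} {A : Form} : PDLProv ((Form.box (Prog.choice π₁ π₂) A).iff ((Form.box π₁ A).and (Form.box π₂ A)))
  | test {A B : Form} : PDLProv ((Form.box (Prog.test A) B).iff (A.impl B))
  | seq {π₁ π₂ : Prog} {A : Form} : PDLProv ((Form.box (Prog.seq π₁ π₂) A).iff (Form.box π₁ (Form.box π₂ A)))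
  | fixpoint {π : Prog} {A : Form} : PDLProv ((A.and (Form.box π (Form.box (Prog.star π) A))).iff (Form.box (Prog.star π) A))
  | ind {π : Prog} {A : Form} : PDLProv ((A.and (Form.box (Prog.star π) (A.impl (Form.box π A)))).impl (Form.box (Prog.star π) A))
  | mp {A B : Form} : PDLProv (A.impl B) → PDLProv A → PDLProv B
  | nec {π : Prog} {A : Form} : PDLProv A → PDLProv (Form.box π A)

/-- The Hilbert system for PDL□ : PDL plus an S5 universal modality. -/
inductive PDLBoxProv : Form → Prop where
  | taut {A : Form} : Taut A → PDLBoxProv A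
  | k {π : Prog} {A B : Form} : PDLBoxProv ((Form.box π (A.impl B)).impl ((Form.box π A).impl (Form.box π B)))
  | boxAnd {π : Prog} {A B : Form} : PDLBoxProv ((Form.box π (A.and B)).iff ((Form.box π A).and (Form.box π B)))
  | choice {π₁ π₂ : Prog} {A : Form} : PDLBoxProv ((Form.box (Prog.choice π₁ π₂) A).iff ((Form.box π₁ A).and (Form.box π₂ A)))
  | test {A B : Form} : PDLBoxProv ((Form.box (Prog.test A) B).iff (A.impl B))
  | seq {π₁ π₂ : Prog} {A : Form} : PDLBoxProv ((Form.box (Prog.seq π₁ π₂) A).iff (Form.box π₁ (Form.box π₂ A)))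
  | fixpoint {π : Prog} {A : Form} : PDLBoxProv ((A.and (Form.box π (Form.box (Prog.star π) A))).iff (Form.box (Prog.star π) A))
  | ind {π : Prog} {A : Form} : PDLBoxProv ((A.and (Form.box (Prog.star π) (A.impl (Form.box π A)))).impl (Form.box (Prog.star π) A))
  | kbox {A B : Form} : PDLBoxProv ((Form.nec (A.impl B)).impl ((Form.nec A).impl (Form.nec B)))
  | t {A : Form} : PDLBoxProv ((Form.nec A).impl A)
  | five {A : Form} : PDLBoxProv ((Form.diam A).impl (Form.nec (Form.diam A)))
  | diaBox {π : Prog} {A : Form} : PDLBoxProv ((Form.dia π A).impl (Form.diam A))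
  | mp {A B : Form} : PDLBoxProv (A.impl B) → PDLBoxProv A → PDLBoxProv B
  | nec {π : Prog} {A : Form} : PDLBoxProv A → PDLBoxProv (Form.box π A)
  | necBox {A : Form} : PDLBoxProv A → PDLBoxProv (Form.nec A)

/-- A formula is consistent (w.r.t. PDL□). -/
def Consistent (A : Form) : Prop := ¬ PDLBoxProv (A.impl Form.bot)

/-- A PDL□-model: `Rbox` is an equivalence relation containing every atomic program relation. -/
def ModelData.IsPDLBox {S : Type} (M : ModelData S) : Prop :=
  Equivalence M.Rbox ∧ ∀ p s t, M.vp p s t → M.Rbox s t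

/-- The Fischer–Ladner closure of a set of formulas. -/
inductive FL (Γ : Set Form) : Form → Prop where
  | base {γ : Form} : γ ∈ Γ → FL Γ γ
  | neg {γ : Form} : FL Γ (Form.neg γ) → FL Γ γ
  | orl {γ₁ γ₂ : Form} : FL Γ (Form.or γ₁ γ₂) → FL Γ γ₁
  | orr {γ₁ γ₂ : Form} : FL Γ (Form.or γ₁ γ₂) → FL Γ γ₂
  | dia {π : Prog} {γ : Form} : FL Γ (Form.dia π γ) → FL Γ γ
  | nec {γ : Form} : FL Γ (Form.nec γ) → FL Γ γ
  | test {γ₁ γ₂ : Form} : FL Γ (Form.dia (Prog.test γ₁) γ₂) → FL Γ γ₁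
  | seq {π₁ π₂ : Prog} {γ : Form} : FL Γ (Form.dia (Prog.seq π₁ π₂) γ) → FL Γ (Form.dia π₁ (Form.dia π₂ γ))
  | choicel {π₁ π₂ : Prog} {γ : Form} : FL Γ (Form.dia (Prog.choice π₁ π₂) γ) → FL Γ (Form.dia π₁ γ)
  | choicer {π₁ π₂ : Prog} {γ : Form} : FL Γ (Form.dia (Prog.choice π₁ π₂) γ) → FL Γ (Form.dia π₂ γ)
  | star1 {π : Prog} {γ : Form} : FL Γ (Form.dia (Prog.star π) γ) → FL Γ (Form.dia π γ)
  | star2 {π : Prog} {γ : Form} : FL Γ (Form.dia (Prog.star π) γ) → FL Γ (Form.dia π (Form.dia (Prog.star π) γ))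

/-- FL±(Γ) : the Fischer–Ladner closure together with negations of its members. -/
def FLpm (Γ : Set Form) : Set Form := {γ | FL Γ γ} ∪ {γ | ∃ δ, FL Γ δ ∧ γ = Form.neg δ}

/-- Conjunction of a finite set of formulas. -/
noncomputable def conj (W : Finset Form) : Form := W.toList.foldr Form.and Form.top
/-- Disjunction of a finite set of formulas. -/
noncomputable def disj (W : Finset Form) : Form := W.toList.foldr Form.or Form.bot

/-- S(Γ): maximal consistent subsets of FL±(Γ). -/
def SStates (Γ : Set Form) : Set (Finset Form) :=
  {W | ↑W ⊆ FLpm Γ ∧ Consistent (conj W) ∧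
    ∀ γ ∈ FLpm Γ, γ ∉ W → ¬ Consistent (conj (insert γ W))}

def CanState (Γ : Set Form) : Type := {W : Finset Form // W ∈ SStates Γ}

/-- The canonical PDL□-model. -/
noncomputable def canModel (Γ : Set Form) : ModelData (CanState Γ) where
  vf a := {W | Form.atom a ∈ W.1}
  vp p W₁ W₂ := Consistent ((conj W₁.1).and (Form.dia (Prog.atom p) (conj W₂.1)))
  Rbox W₁ W₂ := Consistent ((conj W₁.1).and (Form.diam (conj W₂.1)))
/-- A formula is dynamic-modal free (dmff): it contains no `⟨π⟩`. -/
def DMFree : Form → Prop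
  | Form.atom _ => True
  | Form.bot => True
  | Form.neg A => DMFree A
  | Form.or A B => DMFree A ∧ DMFree B
  | Form.dia _ _ => False
  | Form.nec A => DMFree A

/-- Program valuations on a state space `S`. -/
def Valu (S : Type) : Type := ℕ → S → S → Prop

/-- A valuation is compatible with `R` when every atomic program relation is contained in `R`. -/
def ValCompat {S : Type} (R : S → S → Prop) (v : Valu S) : Prop := ∀ p s t, v p s t → R s t

/-- A PEDAL-model. -/
structure PModel (S : Type) where
  vf : ℕ → Set S
  Rbox : S → S → Prop
  equiv : Equivalence Rbox
  Part : Set (Set (Valu S))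
  mu : Set (Valu S) → ℝ
  part_finite : Part.Finite
  part_val : ∀ P ∈ Part, ∀ v ∈ P, ValCompat Rbox v
  part_disj : ∀ P ∈ Part, ∀ Q ∈ Part, P ≠ Q → Disjoint P Q
  part_cover : ∀ v : Valu S, ValCompat Rbox v → ∃ P ∈ Part, v ∈ P
  mu_nonneg : ∀ P ∈ Part, 0 ≤ mu P
  mu_sum : ∑ᶠ P ∈ Part, mu P = 1
  mu_supp : ∀ P ∈ Part, mu P ≠ 0 → P.Finite

/-- The PDL□-model `M(v)` obtained from a PEDAL-model by fixing a program valuation. -/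
def PModel.toModel {S : Type} (M : PModel S) (v : Valu S) : ModelData S :=
  ⟨M.vf, v, M.Rbox⟩

/-- The measure on sets of valuations induced by spreading each cell's probability uniformly. -/
noncomputable def PModel.meas {S : Type} (M : PModel S) (X : Set (Valu S)) : ℝ :=
  ∑ᶠ P ∈ M.Part, M.mu P * (((P ∩ X).ncard : ℝ) / (P.ncard : ℝ))

/-- The set of (compatible) valuations making `γ` true at `s`, i.e. `Val^S_p(s,γ)`. -/
def PModel.valSet {S : Type} (M : PModel S) (s : S) (γ : Form) : Set (Valu S) :=
  {v | ValCompat M.Rbox v ∧ Sat (M.toModel v) s γ}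

/-- μ(s, γ): the induced probability of the ground formula γ at state s. -/
noncomputable def PModel.pr {S : Type} (M : PModel S) (s : S) (γ : Form) : ℝ :=
  M.meas (M.valSet s γ)

/-- The probabilistic language L₁. -/
inductive PForm : Type where
  | ge : Form → ℚ → PForm
  | neg : PForm → PForm
  | or : PForm → PForm → PForm
deriving DecidableEq

def PForm.impl (A B : PForm) : PForm := PForm.or (PForm.neg A) B
def PForm.and (A B : PForm) : PForm := PForm.neg (PForm.or (PForm.neg A) (PForm.neg B))
def PForm.iff (A B : PForm) : PForm := (A.impl B).and (B.impl A)
/-- Pr(γ) < q := ¬ Pr(γ) ≥ q -/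
def PForm.lt (γ : Form) (q : ℚ) : PForm := PForm.neg (PForm.ge γ q)
/-- Pr(γ) ≤ q := Pr(¬γ) ≥ 1 − q -/
def PForm.le (γ : Form) (q : ℚ) : PForm := PForm.ge (Form.neg γ) (1 - q)
/-- Pr(γ) = q := Pr(γ) ≥ q ∧ Pr(γ) ≤ q -/
def PForm.eq (γ : Form) (q : ℚ) : PForm := (PForm.ge γ q).and (PForm.le γ q)

def pbeval (v : PForm → Bool) : PForm → Bool
  | PForm.neg A => ! pbeval v A
  | PForm.or A B => pbeval v A || pbeval v B
  | A => v A

def PTaut (A : PForm) : Prop := ∀ v, pbeval v A = true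

/-- The PEDAL proof system (with the infinitary Archimedean rule `r3`). -/
inductive PProv : PForm → Prop where
  | taut {A : PForm} : PTaut A → PProv A
  | a2 {γ : Form} : PProv (PForm.ge γ 0)
  | a3 {γ : Form} : DMFree γ → PProv ((PForm.eq γ 1).or (PForm.eq γ 0))
  | a4 {γ : Form} {r₁ r₂ : ℚ} : 0 ≤ r₁ → r₂ ≤ 1 → r₁ < r₂ →
      PProv ((PForm.le γ r₁).impl (PForm.lt γ r₂))
  | a5 {γ : Form} {r : ℚ} : 0 ≤ r → r ≤ 1 → PProv ((PForm.lt γ r).impl (PForm.le γ r))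
  | a6 {γ₁ γ₂ : Form} {r₁ r₂ : ℚ} : 0 ≤ r₁ → r₁ ≤ 1 → 0 ≤ r₂ → r₂ ≤ 1 →
      PProv ((((PForm.ge γ₁ r₁).and (PForm.ge γ₂ r₂)).and (PForm.eq (γ₁.and γ₂) 0)).impl
        (PForm.ge (Form.or γ₁ γ₂) (min 1 (r₁ + r₂))))
  | a7 {γ₁ γ₂ : Form} {r₁ r₂ : ℚ} : 0 ≤ r₁ → 0 ≤ r₂ → r₁ + r₂ ≤ 1 →
      PProv (((PForm.le γ₁ r₁).and (PForm.lt γ₂ r₂)).impl (PForm.lt (Form.or γ₁ γ₂) (r₁ + r₂)))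
  | mp {A B : PForm} : PProv (A.impl B) → PProv A → PProv B
  | r2 {γ : Form} : PDLBoxProv γ → PProv (PForm.eq γ 1)
  | r3 {A : PForm} {γ : Form} {r : ℚ} : 0 < r → r ≤ 1 →
      (∀ k : ℕ, (1 : ℚ) / r ≤ (k : ℚ) → PProv (A.impl (PForm.ge γ (r - 1 / (k : ℚ))))) →
      PProv (A.impl (PForm.ge γ r))

/-- PEDAL semantics. -/
def PSat {S : Type} (M : PModel S) (s : S) : PForm → Prop
  | PForm.ge γ q => (q : ℝ) ≤ M.pr s γ
  | PForm.neg A => ¬ PSat M s A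
  | PForm.or A B => PSat M s A ∨ PSat M s B

/-- Big conjunction of a list of L₁-formulas. -/
def bigAndP : List PForm → PForm
  | [] => PForm.or (PForm.ge Form.bot 0) (PForm.neg (PForm.ge Form.bot 0))
  | [A] => A
  | A :: l => A.and (bigAndP l)

/-- Big disjunction of a list of ground formulas. -/
def bigOrF : List Form → Form
  | [] => Form.bot
  | [A] => A
  | A :: l => Form.or A (bigOrF l)

/-- Two states are dmff-compatible when they contain exactly the same dmffs. -/
def DmffComp (W V : Finset Form) : Prop := ∀ γ : Form, DMFree γ → (γ ∈ W ↔ γ ∈ V)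

/-- The model induced by a section σ of S(X). -/
noncomputable def secModel (X : Set Form) (σ : CanState X → CanState X) :
    ModelData (CanState X) where
  vf a := {W | Form.atom a ∈ W.1}
  vp p W₁ W₂ := Consistent ((conj (σ W₁).1).and (Form.dia (Prog.atom p) (conj (σ W₂).1)))
  Rbox W₁ W₂ := Consistent ((conj W₁.1).and (Form.diam (conj W₂.1)))

/-- `FLStep φ ψ`: one of the closure rules puts `ψ` into the closure once `φ` is in it. -/
inductive FLStep : Form → Form → Prop where
  | neg {γ : Form} : FLStep (Form.neg γ) γ
  | orl {γ₁ γ₂ : Form} : FLStep (Form.or γ₁ γ₂) γ₁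
  | orr {γ₁ γ₂ : Form} : FLStep (Form.or γ₁ γ₂) γ₂
  | dia {π : Prog} {γ : Form} : FLStep (Form.dia π γ) γ
  | nec {γ : Form} : FLStep (Form.nec γ) γ
  | test {γ₁ γ₂ : Form} : FLStep (Form.dia (Prog.test γ₁) γ₂) γ₁
  | seq {π₁ π₂ : Prog} {γ : Form} :
      FLStep (Form.dia (Prog.seq π₁ π₂) γ) (Form.dia π₁ (Form.dia π₂ γ))
  | choicel {π₁ π₂ : Prog} {γ : Form} : FLStep (Form.dia (Prog.choice π₁ π₂) γ) (Form.dia π₁ γ)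
  | choicer {π₁ π₂ : Prog} {γ : Form} : FLStep (Form.dia (Prog.choice π₁ π₂) γ) (Form.dia π₂ γ)
  | star1 {π : Prog} {γ : Form} : FLStep (Form.dia (Prog.star π) γ) (Form.dia π γ)
  | star2 {π : Prog} {γ : Form} :
      FLStep (Form.dia (Prog.star π) γ) (Form.dia π (Form.dia (Prog.star π) γ))

theorem FL.exists_reflTransGen {Γ : Set Form} {γ : Form} (hγ : FL Γ γ) :
    ∃ δ ∈ Γ, Relation.ReflTransGen FLStep δ γ := by
  induction hγ with
  | base h => exact ⟨_, h, .refl⟩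
  | neg _ ih | orl _ ih | orr _ ih | dia _ ih | nec _ ih | test _ ih | seq _ ih | choicel _ ih
  | choicer _ ih | star1 _ ih | star2 _ ih =>
    obtain ⟨δ, hδ, hreach⟩ := ih
    exact ⟨δ, hδ, hreach.tail (by constructor)⟩

mutual
def Form.flClosure : Form → Finset Form
  | Form.atom a => {Form.atom a}
  | Form.bot => {Form.bot}
  | Form.neg A => insert (Form.neg A) A.flClosure
  | Form.or A B => insert (Form.or A B) (A.flClosure ∪ B.flClosure)
  | Form.nec A => insert (Form.nec A) A.flClosure
  | Form.dia π A => π.flClosure A ∪ A.flClosure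

/-- The formulas of `(Form.dia π A).flClosure` obtained by unfolding `π`. The closure of `A` is
left out so that the recursion, which is on `π` alone, never has to revisit `⟨π*⟩A`. -/
def Prog.flClosure : Prog → Form → Finset Form
  | Prog.atom p, A => {Form.dia (Prog.atom p) A}
  | Prog.test B, A => insert (Form.dia (Prog.test B) A) B.flClosure
  | Prog.seq π₁ π₂, A =>
      insert (Form.dia (Prog.seq π₁ π₂) A) (π₁.flClosure (Form.dia π₂ A) ∪ π₂.flClosure A)
  | Prog.choice π₁ π₂, A =>
      insert (Form.dia (Prog.choice π₁ π₂) A) (π₁.flClosure A ∪ π₂.flClosure A)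
  | Prog.star π, A =>
      insert (Form.dia (Prog.star π) A) (π.flClosure A ∪ π.flClosure (Form.dia (Prog.star π) A))
end

theorem Prog.dia_mem_flClosure (π : Prog) (A : Form) : Form.dia π A ∈ π.flClosure A := by
  cases π <;> simp [Prog.flClosure]

theorem Form.mem_flClosure_self (A : Form) : A ∈ A.flClosure := by
  cases A with
  | dia π B => exact Finset.mem_union_left _ (π.dia_mem_flClosure B)
  | _ => simp [Form.flClosure]

theorem Prog.flStep_dia_mem_flClosure {π : Prog} {A y : Form} (h : FLStep (Form.dia π A) y) :
    y ∈ π.flClosure A ∪ A.flClosure := by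
  cases h <;>
    simp [Prog.flClosure, Form.mem_flClosure_self, Prog.dia_mem_flClosure]

mutual
theorem Form.flClosure_step {A x y : Form} (hx : x ∈ A.flClosure) (hxy : FLStep x y) :
    y ∈ A.flClosure := by
  cases A with
  | atom | bot =>
    rw [Form.flClosure, Finset.mem_singleton] at hx
    subst hx
    cases hxy
  | neg | nec =>
    rw [Form.flClosure, Finset.mem_insert] at hx ⊢
    rcases hx with rfl | hx
    · cases hxy
      exact .inr (Form.mem_flClosure_self _)
    · exact .inr (Form.flClosure_step hx hxy)
  | or =>
    simp only [Form.flClosure, Finset.mem_insert, Finset.mem_union] at hx ⊢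
    rcases hx with rfl | hx | hx
    · cases hxy
      · exact .inr (.inl (Form.mem_flClosure_self _))
      · exact .inr (.inr (Form.mem_flClosure_self _))
    · exact .inr (.inl (Form.flClosure_step hx hxy))
    · exact .inr (.inr (Form.flClosure_step hx hxy))
  | dia =>
    rw [Form.flClosure, Finset.mem_union] at hx
    rcases hx with hx | hx
    · exact Prog.flClosure_step hx hxy
    · exact Finset.mem_union_right _ (Form.flClosure_step hx hxy)

theorem Prog.flClosure_step {π : Prog} {A x y : Form} (hx : x ∈ π.flClosure A)
    (hxy : FLStep x y) : y ∈ π.flClosure A ∪ A.flClosure := by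
  cases π with
  | atom =>
    rw [Prog.flClosure, Finset.mem_singleton] at hx
    subst hx
    exact Prog.flStep_dia_mem_flClosure hxy
  | test =>
    rw [Prog.flClosure, Finset.mem_insert] at hx
    rcases hx with rfl | hx
    · exact Prog.flStep_dia_mem_flClosure hxy
    · simp only [Prog.flClosure, Finset.mem_union, Finset.mem_insert]
      exact .inl (.inr (Form.flClosure_step hx hxy))
  | seq | choice | star =>
    rw [Prog.flClosure, Finset.mem_insert, Finset.mem_union] at hx
    rcases hx with rfl | hx | hx
    · exact Prog.flStep_dia_mem_flClosure hxy
    all_goals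
      have := Prog.flClosure_step hx hxy
      simp only [Prog.flClosure, Form.flClosure, Finset.mem_insert, Finset.mem_union] at this ⊢
      tauto
end

theorem Form.finite_reflTransGen_flStep (A : Form) :
    {B | Relation.ReflTransGen FLStep A B}.Finite := by
  refine A.flClosure.finite_toSet.subset fun B hB => ?_
  induction hB with
  | refl => exact A.mem_flClosure_self
  | tail _ hstep ih => exact Form.flClosure_step ih hstep

/-- the Fischer–Ladner closure of a finite set of PDL formulas is finite. -/
theorem stmt2 (Γ : Set Form) (h : Γ.Finite) : {γ | FL Γ γ}.Finite := by
  refine (h.biUnion fun δ _ => δ.finite_reflTransGen_flStep).subset fun γ hγ => ?_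
  obtain ⟨δ, hδ, hreach⟩ := FL.exists_reflTransGen hγ
  exact Set.mem_biUnion hδ hreach

end PEDAL
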